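/- Let D be a non-trivial (v,b,r,k,λ)-BIBD with v ≤ b, and let A be the adjacency matrix over ℝ of the flag-graph Γ₁(D). Then the characteristic polynomial of A equals (X − (r+k−2)) · (X − (k−2))^{b−v} · (X + 2)^{bk−b−v+1} · (X² − (r+k−4)·X + ((r−2)(k−2) − (r−λ)))^{v−1}. -/

import Mathlib

/-- A `(v,b,r,k,lam)`-balanced incomplete block design: a finite set of `v` points and a
family of `b` distinct blocks, each block a `k`-element subset of the points with
`1 < k < v`, such that every point lies in exactly `r` blocks and every pair of distinct
points is contained in exactly `lam` blocks (all parameters positive). -/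
structure BIBD (v b r k lam : ℕ) where
  P : Type
  [fintypeP : Fintype P]
  [decEqP : DecidableEq P]
  blocks : Finset (Finset P)
  card_points : Fintype.card P = v
  card_blocks : blocks.card = b
  block_size : ∀ c ∈ blocks, c.card = k
  one_lt_k : 1 < k
  k_lt_v : k < v
  lam_pos : 0 < lam
  point_deg : ∀ p : P, (blocks.filter (fun c => p ∈ c)).card = r
  pair_deg : ∀ p q : P, p ≠ q → (blocks.filter (fun c => p ∈ c ∧ q ∈ c)).card = lam

attribute [instance] BIBD.fintypeP BIBD.decEqP

variable {v b r k lam : ℕ}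

/-- A flag of a BIBD: an incident point-block pair `(p, c)` with `p ∈ c`. -/
def BIBD.Flag (D : BIBD v b r k lam) : Type :=
  {pc : D.P × Finset D.P // pc.2 ∈ D.blocks ∧ pc.1 ∈ pc.2}

instance (D : BIBD v b r k lam) : Fintype D.Flag :=
  inferInstanceAs (Fintype {pc : D.P × Finset D.P // pc.2 ∈ D.blocks ∧ pc.1 ∈ pc.2})

instance (D : BIBD v b r k lam) : DecidableEq D.Flag :=
  inferInstanceAs (DecidableEq {pc : D.P × Finset D.P // pc.2 ∈ D.blocks ∧ pc.1 ∈ pc.2})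

/-- The flag-graph `Γ₁(D)`: vertices are the flags of `D`; two distinct flags `(p,c)` and
`(q,d)` are adjacent iff `p = q` or `c = d`. -/
def BIBD.Gamma1 (D : BIBD v b r k lam) : SimpleGraph D.Flag where
  Adj x y := x ≠ y ∧ (x.1.1 = y.1.1 ∨ x.1.2 = y.1.2)
  symm := ⟨fun _ _ h => ⟨h.1.symm, h.2.imp Eq.symm Eq.symm⟩⟩
  loopless := ⟨fun _ h => h.1 rfl⟩

instance (D : BIBD v b r k lam) : DecidableRel D.Gamma1.Adj :=
  fun x y => inferInstanceAs (Decidable (x ≠ y ∧ (x.1.1 = y.1.1 ∨ x.1.2 = y.1.2)))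

/-!
`Γ₁(D)` is the line graph of the incidence graph of `D`. If `B` is the vertex–edge incidence
matrix of that graph (rows: points and blocks, columns: flags), then `A = Bᵀ B - 2`, and
`Bᵀ B`, `B Bᵀ` have the same characteristic polynomial up to a power of `X`. Now
`B Bᵀ = [[r, N], [Nᵀ, k]]` with `N` the point–block incidence matrix; eliminating the
off-diagonal blocks leaves the characteristic polynomial of `N Nᵀ = (r - λ) I + λ J`, a scalar
plus a rank-one matrix, evaluated at `(X - r)(X - k)`. The count `λ (v - 1) = r (k - 1)` then
splits off the eigenvalues `0` and `r + k` of `Bᵀ B`.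
-/

open Finset Matrix Polynomial

namespace Matrix

variable {R : Type*} [CommRing R] {m n : Type*} [Fintype m] [Fintype n] [DecidableEq m]
  [DecidableEq n]

theorem det_fromBlocks_scalar_mul_pow (a c : R) (A : Matrix m n R) (B : Matrix n m R) :
    (fromBlocks (scalar m a) A B (scalar n c)).det * c ^ Fintype.card m =
      (scalar m (a * c) - A * B).det * c ^ Fintype.card n := by
  have h : fromBlocks (scalar m a) A B (scalar n c) * fromBlocks (scalar m c) 0 (-B) 1 =
      fromBlocks (scalar m (a * c) - A * B) A 0 (scalar n c) := by
    rw [fromBlocks_multiply]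
    congr 1 <;> ext <;> simp [sub_eq_add_neg, mul_comm]
  simpa [det_fromBlocks_zero₁₂, det_fromBlocks_zero₂₁, scalar_apply, mul_comm] using
    congrArg det h

theorem charpoly_comp (M : Matrix n n R) (p : R[X]) :
    M.charpoly.comp p = (scalar n p - M.map C).det := by
  rw [← eval_charpoly, charpoly_map, eval_map]
  rfl

theorem charmatrix_scalar (a : R) : charmatrix (scalar n a) = scalar n (X - C a) := by
  rw [scalar_apply, charmatrix_diagonal]
  rfl

theorem charpoly_fromBlocks_scalar_mul_pow (a c : R) (A : Matrix m n R) (B : Matrix n m R) :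
    (fromBlocks (scalar m a) A B (scalar n c)).charpoly * (X - C c) ^ Fintype.card m =
      (A * B).charpoly.comp ((X - C a) * (X - C c)) * (X - C c) ^ Fintype.card n := by
  rw [charpoly, charmatrix_fromBlocks, charmatrix_scalar, charmatrix_scalar,
    det_fromBlocks_scalar_mul_pow, Matrix.neg_mul, Matrix.mul_neg, neg_neg, ← Matrix.map_mul,
    charpoly_comp]

end Matrix

namespace BIBD

section Flags

variable {D : BIBD v b r k lam}

def Flag.point (f : D.Flag) : D.P := f.1.1

def Flag.block (f : D.Flag) : D.blocks := ⟨f.1.2, f.2.1⟩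

def Flag.ofMem (p : D.P) (c : D.blocks) (h : p ∈ c.1) : D.Flag := ⟨(p, c.1), c.2, h⟩

@[simp]
theorem Flag.point_ofMem (p : D.P) (c : D.blocks) (h : p ∈ c.1) :
    (Flag.ofMem p c h).point = p :=
  rfl

@[simp]
theorem Flag.block_ofMem (p : D.P) (c : D.blocks) (h : p ∈ c.1) :
    (Flag.ofMem p c h).block = c :=
  rfl

theorem Flag.point_mem_block (f : D.Flag) : f.point ∈ f.block.1 := f.2.2

theorem Flag.ext {f g : D.Flag} (hp : f.point = g.point) (hc : f.block = g.block) : f = g :=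
  Subtype.ext (Prod.ext hp (congrArg Subtype.val hc))

theorem gamma1_adj_iff {f g : D.Flag} :
    D.Gamma1.Adj f g ↔ f ≠ g ∧ (f.point = g.point ∨ f.block = g.block) := by
  rw [Flag.block, Flag.block, Subtype.mk.injEq]
  rfl

variable (D)

theorem card_filter_flag_point (p : D.P) : #{f : D.Flag | f.point = p} = r := by
  refine Eq.trans ?_ (D.point_deg p)
  refine card_bij (fun f _ => f.block.1) ?_ ?_ ?_
  · intro f hf
    simp only [mem_filter, mem_univ, true_and] at hf ⊢
    exact ⟨f.block.2, hf ▸ f.point_mem_block⟩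
  · intro f hf g hg h
    simp only [mem_filter, mem_univ, true_and] at hf hg
    exact Flag.ext (hf.trans hg.symm) (Subtype.ext h)
  · intro c hc
    simp only [mem_filter] at hc
    exact ⟨Flag.ofMem p ⟨c, hc.1⟩ hc.2, by simp, rfl⟩

theorem card_filter_flag_block (c : D.blocks) : #{f : D.Flag | f.block = c} = k := by
  refine Eq.trans ?_ (D.block_size c c.2)
  refine card_bij (fun f _ => f.point) ?_ ?_ ?_
  · intro f hf
    simp only [mem_filter, mem_univ, true_and] at hf
    exact hf ▸ f.point_mem_block
  · intro f hf g hg h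
    simp only [mem_filter, mem_univ, true_and] at hf hg
    exact Flag.ext h (hf.trans hg.symm)
  · intro p hp
    exact ⟨Flag.ofMem p c hp, by simp, rfl⟩

theorem card_flag : Fintype.card D.Flag = b * k := by
  rw [← card_univ, card_eq_sum_card_fiberwise (f := Flag.block) (t := univ)
    (fun _ _ => mem_univ _), sum_congr rfl fun c _ => D.card_filter_flag_block c,
    sum_const, smul_eq_mul, card_univ, Fintype.card_coe, D.card_blocks]

theorem card_filter_flag_point_block (p : D.P) (c : D.blocks) :
    #{f : D.Flag | f.point = p ∧ f.block = c} = if p ∈ c.1 then 1 else 0 := by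
  split_ifs with hp
  · refine card_eq_one.mpr ⟨Flag.ofMem p c hp, ?_⟩
    refine eq_singleton_iff_unique_mem.mpr ⟨by simp, fun f hf => ?_⟩
    simp only [mem_filter, mem_univ, true_and] at hf
    exact Flag.ext hf.1 hf.2
  · refine card_eq_zero.mpr (filter_eq_empty_iff.mpr ?_)
    rintro f - ⟨rfl, rfl⟩
    exact hp f.point_mem_block

end Flags

section Incidence

variable (D : BIBD v b r k lam) (R : Type*) [CommRing R]

def pointFlagIncidence : Matrix D.P D.Flag R := of fun p f => if f.point = p then 1 else 0

def blockFlagIncidence : Matrix D.blocks D.Flag R := of fun c f => if f.block = c then 1 else 0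

def flagIncidence : Matrix (D.P ⊕ D.blocks) D.Flag R :=
  fromRows (D.pointFlagIncidence R) (D.blockFlagIncidence R)

def incidence : Matrix D.P D.blocks R := of fun p c => if p ∈ c.1 then 1 else 0

theorem transpose_pointFlagIncidence_mul_apply (f g : D.Flag) :
    ((D.pointFlagIncidence R)ᵀ * D.pointFlagIncidence R) f g =
      if f.point = g.point then 1 else 0 := by
  simp [mul_apply, pointFlagIncidence]

theorem transpose_blockFlagIncidence_mul_apply (f g : D.Flag) :
    ((D.blockFlagIncidence R)ᵀ * D.blockFlagIncidence R) f g =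
      if f.block = g.block then 1 else 0 := by
  simp [mul_apply, blockFlagIncidence]

theorem adjMatrix_gamma1_eq :
    D.Gamma1.adjMatrix R = (D.flagIncidence R)ᵀ * D.flagIncidence R - scalar D.Flag 2 := by
  ext f g
  rw [flagIncidence, transpose_fromRows, fromCols_mul_fromRows, Matrix.sub_apply,
    Matrix.add_apply, transpose_pointFlagIncidence_mul_apply,
    transpose_blockFlagIncidence_mul_apply, SimpleGraph.adjMatrix_apply, scalar_apply, diagonal_apply]
  simp only [gamma1_adj_iff]
  by_cases hfg : f = g
  · subst hfg; norm_num
  · by_cases hp : f.point = g.point <;> by_cases hc : f.block = g.block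
    · exact absurd (Flag.ext hp hc) hfg
    all_goals simp [hfg, hp, hc]

theorem pointFlagIncidence_mul_transpose :
    D.pointFlagIncidence R * (D.pointFlagIncidence R)ᵀ = scalar D.P (r : R) := by
  ext p q
  rw [scalar_apply, diagonal_apply]
  simp only [mul_apply, transpose_apply, pointFlagIncidence, of_apply, ite_zero_mul_ite_zero,
    mul_one, sum_boole]
  by_cases h : p = q
  · subst h; simp [D.card_filter_flag_point]
  · rw [filter_eq_empty_iff.mpr fun f _ hf => h (hf.1.symm.trans hf.2)]
    simp [h]

theorem blockFlagIncidence_mul_transpose :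
    D.blockFlagIncidence R * (D.blockFlagIncidence R)ᵀ = scalar D.blocks (k : R) := by
  ext c d
  rw [scalar_apply, diagonal_apply]
  simp only [mul_apply, transpose_apply, blockFlagIncidence, of_apply, ite_zero_mul_ite_zero,
    mul_one, sum_boole]
  by_cases h : c = d
  · subst h; simp [D.card_filter_flag_block]
  · rw [filter_eq_empty_iff.mpr fun f _ hf => h (hf.1.symm.trans hf.2)]
    simp [h]

theorem pointFlagIncidence_mul_transpose_blockFlagIncidence :
    D.pointFlagIncidence R * (D.blockFlagIncidence R)ᵀ = D.incidence R := by
  ext p c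
  simp only [mul_apply, transpose_apply, pointFlagIncidence, blockFlagIncidence, of_apply,
    ite_zero_mul_ite_zero, mul_one, sum_boole, card_filter_flag_point_block, incidence]
  split_ifs <;> simp

theorem flagIncidence_mul_transpose :
    D.flagIncidence R * (D.flagIncidence R)ᵀ =
      fromBlocks (scalar D.P (r : R)) (D.incidence R) (D.incidence R)ᵀ
        (scalar D.blocks (k : R)) := by
  rw [flagIncidence, transpose_fromRows, fromRows_mul_fromCols, pointFlagIncidence_mul_transpose,
    blockFlagIncidence_mul_transpose, pointFlagIncidence_mul_transpose_blockFlagIncidence,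
    ← pointFlagIncidence_mul_transpose_blockFlagIncidence, transpose_mul, transpose_transpose]

theorem incidence_mul_transpose :
    D.incidence R * (D.incidence R)ᵀ =
      vecMulVec (fun _ => (lam : R)) (fun _ => 1) + scalar D.P ((r : R) - lam) := by
  ext p q
  rw [Matrix.add_apply, vecMulVec_apply, scalar_apply, diagonal_apply]
  simp only [mul_apply, transpose_apply, incidence, of_apply, ite_zero_mul_ite_zero, mul_one]
  rw [sum_coe_sort D.blocks (fun c => if p ∈ c ∧ q ∈ c then (1 : R) else 0), sum_boole]
  by_cases h : p = q
  · subst h; simp [D.point_deg]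
  · simp [h, D.pair_deg p q h]

theorem incidence_mulVec_const (a : R) : D.incidence R *ᵥ (fun _ => a) = fun _ => r * a := by
  ext p
  simp only [mulVec, dotProduct, incidence, of_apply, ite_mul, one_mul, zero_mul]
  rw [sum_coe_sort D.blocks (fun c => if p ∈ c then a else 0), sum_ite, sum_const_zero,
    add_zero, sum_const, D.point_deg, nsmul_eq_mul]

theorem transpose_incidence_mulVec_const (a : R) :
    (D.incidence R)ᵀ *ᵥ (fun _ => a) = fun _ => k * a := by
  ext c
  simp only [mulVec, dotProduct, transpose_apply, incidence, of_apply, ite_mul, one_mul,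
    zero_mul]
  rw [sum_ite, sum_const_zero, add_zero, sum_const, filter_univ_mem, D.block_size c c.2,
    nsmul_eq_mul]

end Incidence

theorem lam_mul_sub_one (D : BIBD v b r k lam) : (lam : ℤ) * (v - 1) = r * (k - 1) := by
  have hP : Nonempty D.P := by
    rw [← Fintype.card_pos_iff, D.card_points]
    exact zero_lt_one.trans (D.one_lt_k.trans D.k_lt_v)
  obtain ⟨p⟩ := hP
  have h : (r : ℤ) * (k * 1) = lam * v + (r - lam) := calc
    (r : ℤ) * (k * 1) = ((D.incidence ℤ * (D.incidence ℤ)ᵀ) *ᵥ fun _ => 1) p := by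
      rw [← mulVec_mulVec, transpose_incidence_mulVec_const, incidence_mulVec_const]
    _ = lam * v + (r - lam) := by
      rw [incidence_mul_transpose, add_mulVec, vecMulVec_mulVec, scalar_apply, Pi.add_apply,
        mulVec_diagonal]
      simp [dotProduct, D.card_points, mul_comm]
  linear_combination -h

section Charpoly

variable (D : BIBD v b r k lam) (R : Type*) [CommRing R]

theorem charpoly_incidence_mul_transpose :
    (D.incidence R * (D.incidence R)ᵀ).charpoly =
      (X - C ((r : R) - lam)) ^ v - C ((v : R) * lam) * (X - C ((r : R) - lam)) ^ (v - 1) := by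
  rw [incidence_mul_transpose, ← sub_neg_eq_add, ← map_neg, charpoly_sub_scalar,
    charpoly_vecMulVec, D.card_points]
  simp [dotProduct, D.card_points, smul_eq_C_mul, sub_eq_add_neg]

theorem charpoly_flagIncidence_mul_transpose :
    (D.flagIncidence R * (D.flagIncidence R)ᵀ).charpoly * (X - C (k : R)) ^ v =
      (((X - C (r : R)) * (X - C (k : R)) - C ((r : R) - lam)) ^ v -
        C ((v : R) * lam) * ((X - C (r : R)) * (X - C (k : R)) - C ((r : R) - lam)) ^ (v - 1)) *
        (X - C (k : R)) ^ b := by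
  have h := charpoly_fromBlocks_scalar_mul_pow (r : R) (k : R) (D.incidence R) (D.incidence R)ᵀ
  rw [D.card_points, Fintype.card_coe, D.card_blocks, D.charpoly_incidence_mul_transpose] at h
  rw [flagIncidence_mul_transpose, h]
  simp [sub_comp, pow_comp, mul_comp]

theorem charpoly_transpose_flagIncidence_mul (hvb : v ≤ b) :
    ((D.flagIncidence R)ᵀ * D.flagIncidence R).charpoly =
      (X - C ((r : R) + k)) * (X - C (k : R)) ^ (b - v) * X ^ (b * k - b - v + 1) *
        ((X - C (r : R)) * (X - C (k : R)) - C ((r : R) - lam)) ^ (v - 1) := by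
  have hfactor : (X - C (r : R)) * (X - C (k : R)) - C ((r : R) - lam) - C ((v : R) * lam) =
      X * (X - C ((r : R) + k)) := by
    have h := congrArg (Int.cast : ℤ → R[X]) D.lam_mul_sub_one
    push_cast at h
    simp only [map_sub, map_add, map_mul, map_natCast]
    linear_combination -h
  have hsylvester := charpoly_mul_comm' (D.flagIncidence R)ᵀ (D.flagIncidence R)
  rw [Fintype.card_sum, D.card_points, Fintype.card_coe, D.card_blocks, card_flag] at hsylvester
  have hblock := D.charpoly_flagIncidence_mul_transpose R
  set Y := (X - C (r : R)) * (X - C (k : R)) - C ((r : R) - lam)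
  have hY : Y ^ v = Y ^ (v - 1) * Y := by
    rw [← pow_succ, Nat.sub_add_cancel (D.one_lt_k.trans D.k_lt_v).le]
  obtain ⟨d, rfl⟩ : ∃ d, b = v + d := Nat.exists_eq_add_of_le hvb
  obtain ⟨e, he⟩ : ∃ e, (v + d) * k = v + (v + d) + e :=
    Nat.exists_eq_add_of_le (by nlinarith [D.one_lt_k])
  rw [he] at hsylvester
  rw [Nat.add_sub_cancel_left, he, show v + (v + d) + e - (v + d) - v + 1 = e + 1 by omega]
  apply ((monic_X_pow (v + (v + d))).mul ((monic_X_sub_C (k : R)).pow v)).isRegular.left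
  calc X ^ (v + (v + d)) * (X - C (k : R)) ^ v *
        ((D.flagIncidence R)ᵀ * D.flagIncidence R).charpoly
      = X ^ (v + (v + d) + e) *
          ((D.flagIncidence R * (D.flagIncidence R)ᵀ).charpoly * (X - C (k : R)) ^ v) := by
        rw [mul_right_comm, hsylvester]; ring
    _ = X ^ (v + (v + d) + e) * (Y ^ (v - 1) * (Y - C ((v : R) * lam))) *
          (X - C (k : R)) ^ (v + d) := by
        rw [hblock, hY]; ring
    _ = _ := by
        rw [hfactor]; ring

end Charpoly

end BIBD

theorem flagGraph_adjMatrix_charpoly_general (D : BIBD v b r k lam)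
    (hvb : v ≤ b) :
    (D.Gamma1.adjMatrix ℝ).charpoly =
      (Polynomial.X - Polynomial.C ((r : ℝ) + (k : ℝ) - 2)) *
      (Polynomial.X - Polynomial.C ((k : ℝ) - 2)) ^ (b - v) *
      (Polynomial.X + Polynomial.C 2) ^ (b * k - b - v + 1) *
      (Polynomial.X ^ 2 - Polynomial.C ((r : ℝ) + (k : ℝ) - 4) * Polynomial.X +
        Polynomial.C (((r : ℝ) - 2) * ((k : ℝ) - 2) - ((r : ℝ) - (lam : ℝ)))) ^ (v - 1) := by
  rw [D.adjMatrix_gamma1_eq ℝ, charpoly_sub_scalar, D.charpoly_transpose_flagIncidence_mul ℝ hvb]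
  simp only [mul_comp, pow_comp, sub_comp, X_comp, C_comp]
  simp only [map_sub, map_add, map_mul, map_natCast, map_ofNat]
  ring

/-- The characteristic polynomial of the adjacency matrix of the flag-graph `Γ₁(D)` of a
non-trivial `(v,b,r,k,λ)`-BIBD with `v ≤ b`. -/
theorem flagGraph_adjMatrix_charpoly (D : BIBD v b r k lam) (hnt : 1 < v - k)
    (hvb : v ≤ b) :
    (D.Gamma1.adjMatrix ℝ).charpoly =
      (Polynomial.X - Polynomial.C ((r : ℝ) + (k : ℝ) - 2)) *
      (Polynomial.X - Polynomial.C ((k : ℝ) - 2)) ^ (b - v) *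
      (Polynomial.X + Polynomial.C 2) ^ (b * k - b - v + 1) *
      (Polynomial.X ^ 2 - Polynomial.C ((r : ℝ) + (k : ℝ) - 4) * Polynomial.X +
        Polynomial.C (((r : ℝ) - 2) * ((k : ℝ) - 2) - ((r : ℝ) - (lam : ℝ)))) ^ (v - 1) :=
  flagGraph_adjMatrix_charpoly_general D hvb
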